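/- For 0 < λ ≤ 1, every f = h + conj(g) ∈ F_H^0(λ) satisfies |z| - λ|z|²/2 ≤ |f(z)| ≤ |z| + λ|z|²/2 for all z ∈ 𝔻. -/

import Mathlib

/-!
For every unimodular `c`, the holomorphic map `h' - 1 + c g'` vanishes at `0` and sends the disc
into the disc of radius `λ`, so by the Schwarz lemma `|h'(w) - 1| + |g'(w)| ≤ λ|w|`, choosing `c`
so that the two terms are aligned at `w`. Integrating `f(tz) - tz` along `t ∈ [0, 1]` then gives
`|f(z) - z| ≤ λ|z|²/2`, and both bounds follow from the triangle inequality.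
-/

open Metric Set
open scoped ComplexConjugate

lemma exists_norm_eq_one_norm_add_mul_eq (a b : ℂ) :
    ∃ c : ℂ, ‖c‖ = 1 ∧ ‖a + c * b‖ = ‖a‖ + ‖b‖ := by
  set c := Complex.exp (↑(a.arg - b.arg) * Complex.I)
  have hc : ‖c‖ = 1 := Complex.norm_exp_ofReal_mul_I _
  have hcb : c * b = ‖b‖ * Complex.exp (a.arg * Complex.I) := by
    conv_lhs => rw [← Complex.norm_mul_exp_arg_mul_I b]
    rw [mul_left_comm, ← Complex.exp_add]
    push_cast
    ring_nf
  have hsum : a + c * b = ↑(‖a‖ + ‖b‖) * Complex.exp (a.arg * Complex.I) := by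
    rw [hcb]
    nth_rewrite 1 [← Complex.norm_mul_exp_arg_mul_I a]
    push_cast
    ring
  refine ⟨c, hc, ?_⟩
  rw [hsum, norm_mul, Complex.norm_exp_ofReal_mul_I, mul_one, Complex.norm_of_nonneg (by positivity)]

theorem schwarz_norm_add_norm_le {F G : ℂ → ℂ} {lam : ℝ}
    (hF : DifferentiableOn ℂ F (ball 0 1)) (hG : DifferentiableOn ℂ G (ball 0 1))
    (hF0 : F 0 = 0) (hG0 : G 0 = 0) (hbound : ∀ z ∈ ball (0 : ℂ) 1, ‖F z‖ + ‖G z‖ ≤ lam)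
    {w : ℂ} (hw : w ∈ ball (0 : ℂ) 1) : ‖F w‖ + ‖G w‖ ≤ lam * ‖w‖ := by
  -- `c` aligns `F w` and `c * G w`, so `‖F w‖ + ‖G w‖` is the modulus of one holomorphic map
  obtain ⟨c, hc, hFG⟩ := exists_norm_eq_one_norm_add_mul_eq (F w) (G w)
  have hd : DifferentiableOn ℂ (fun z ↦ F z + c * G z) (ball 0 1) :=
    hF.add ((differentiableOn_const c).mul hG)
  have hmaps : MapsTo (fun z ↦ F z + c * G z) (ball 0 1) (closedBall (F 0 + c * G 0) lam) := by
    intro z hz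
    rw [hF0, hG0, mul_zero, add_zero, mem_closedBall_zero_iff]
    calc ‖F z + c * G z‖ ≤ ‖F z‖ + ‖c * G z‖ := norm_add_le _ _
      _ = ‖F z‖ + ‖G z‖ := by rw [norm_mul, hc, one_mul]
      _ ≤ lam := hbound z hz
  have := Complex.dist_le_div_mul_dist_of_mapsTo_ball hd hmaps hw
  simpa only [hF0, hG0, mul_zero, add_zero, dist_zero_right, div_one, hFG] using this

lemma hasDerivAt_comp_ofReal_mul {f : ℂ → ℂ} {z : ℂ} {t : ℝ}
    (hf : DifferentiableAt ℂ f (t * z)) :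
    HasDerivAt (fun s : ℝ ↦ f (s * z)) (deriv f (t * z) * z) t :=
  (hf.hasDerivAt.comp (t : ℂ) ((hasDerivAt_id (t : ℂ)).mul_const z)).comp_ofReal.congr_deriv
    (by simp)

lemma norm_le_of_norm_deriv_le_mul {E : Type*} [NormedAddCommGroup E] [NormedSpace ℝ E]
    {φ φ' : ℝ → E} {C b : ℝ} (hb : 0 ≤ b) (hφ0 : φ 0 = 0)
    (hd : ∀ t ∈ Icc 0 b, HasDerivAt φ (φ' t) t) (hbound : ∀ t ∈ Ico 0 b, ‖φ' t‖ ≤ C * t) :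
    ‖φ b‖ ≤ C / 2 * b ^ 2 := by
  refine image_norm_le_of_norm_deriv_right_le_deriv_boundary (B := fun t ↦ C / 2 * t ^ 2)
    (fun t ht ↦ (hd t ht).continuousAt.continuousWithinAt)
    (fun t ht ↦ (hd t (Ico_subset_Icc_self ht)).hasDerivWithinAt) (by simp [hφ0])
    (fun t ↦ ((hasDerivAt_pow 2 t).const_mul (C / 2)).congr_deriv (by norm_num; ring)) hbound
    (right_mem_Icc.2 hb)

theorem norm_add_conj_sub_le {h g : ℂ → ℂ} {lam : ℝ}
    (hh : DifferentiableOn ℂ h (ball 0 1)) (hg : DifferentiableOn ℂ g (ball 0 1))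
    (h0 : h 0 = 0) (g0 : g 0 = 0)
    (hbound : ∀ w ∈ ball (0 : ℂ) 1, ‖deriv h w - 1‖ + ‖deriv g w‖ ≤ lam * ‖w‖)
    {z : ℂ} (hz : z ∈ ball (0 : ℂ) 1) : ‖h z + conj (g z) - z‖ ≤ lam * ‖z‖ ^ 2 / 2 := by
  have hnorm : ∀ t ∈ Icc (0 : ℝ) 1, ‖(t : ℂ) * z‖ = t * ‖z‖ := fun t ht ↦ by
    rw [norm_mul, Complex.norm_of_nonneg ht.1]
  have hmem : ∀ t ∈ Icc (0 : ℝ) 1, (t : ℂ) * z ∈ ball (0 : ℂ) 1 := fun t ht ↦ by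
    rw [mem_ball_zero_iff, hnorm t ht]
    nlinarith [ht.2, norm_nonneg z, mem_ball_zero_iff.1 hz]
  have hd : ∀ t ∈ Icc (0 : ℝ) 1, HasDerivAt (fun s : ℝ ↦ h (s * z) + conj (g (s * z)) - s * z)
      ((deriv h (t * z) - 1) * z + conj (deriv g (t * z) * z)) t := fun t ht ↦ by
    have diff := fun {f : ℂ → ℂ} (hf : DifferentiableOn ℂ f (ball 0 1)) ↦
      hasDerivAt_comp_ofReal_mul (hf.differentiableAt (isOpen_ball.mem_nhds (hmem t ht)))
    refine (((diff hh).add (diff hg).star).sub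
      ((hasDerivAt_id t).ofReal_comp.mul_const z)).congr_deriv ?_
    simp only [Complex.ofReal_one, one_mul, Complex.star_def]
    ring
  have := norm_le_of_norm_deriv_le_mul zero_le_one (by simp [h0, g0]) hd fun t ht ↦ by
    have ht' := Ico_subset_Icc_self ht
    calc ‖(deriv h (t * z) - 1) * z + conj (deriv g (t * z) * z)‖
        ≤ (‖deriv h (t * z) - 1‖ + ‖deriv g (t * z)‖) * ‖z‖ := by
          refine (norm_add_le _ _).trans_eq ?_
          rw [Complex.norm_conj, norm_mul, norm_mul, add_mul]
      _ ≤ lam * (t * ‖z‖) * ‖z‖ := by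
          rw [← hnorm t ht']
          exact mul_le_mul_of_nonneg_right (hbound _ (hmem t ht')) (norm_nonneg z)
      _ = lam * ‖z‖ ^ 2 * t := by ring
  simpa [div_mul_eq_mul_div] using this

theorem growth_bounds_lambda_general
    (h g : ℂ → ℂ) (lam : ℝ)
    (hh : DifferentiableOn ℂ h (ball (0:ℂ) 1))
    (hg : DifferentiableOn ℂ g (ball (0:ℂ) 1))
    (h0 : h 0 = 0) (h1 : deriv h 0 = 1) (g0 : g 0 = 0) (g1 : deriv g 0 = 0)
    (hineq : ∀ z ∈ ball (0:ℂ) 1, ‖deriv h z - 1‖ < lam - ‖deriv g z‖) :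
    ∀ z ∈ ball (0:ℂ) 1,
      ‖z‖ - lam * ‖z‖ ^ 2 / 2 ≤ ‖h z + (starRingEnd ℂ) (g z)‖ ∧
      ‖h z + (starRingEnd ℂ) (g z)‖ ≤ ‖z‖ + lam * ‖z‖ ^ 2 / 2 := by
  have differentiableOn_deriv := fun {f : ℂ → ℂ} (hf : DifferentiableOn ℂ f (ball 0 1)) ↦
    (hf.analyticOnNhd isOpen_ball).deriv.differentiableOn
  have schwarz := fun w (hw : w ∈ ball (0 : ℂ) 1) ↦
    schwarz_norm_add_norm_le ((differentiableOn_deriv hh).sub_const 1) (differentiableOn_deriv hg)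
      (by rw [h1, sub_self]) g1 (fun z hz ↦ by linarith [hineq z hz]) hw
  intro z hz
  have hclose := norm_add_conj_sub_le hh hg h0 g0 schwarz hz
  have := abs_le.1 ((abs_norm_sub_norm_le _ _).trans hclose)
  constructor <;> linarith

theorem growth_bounds_lambda
    (h g : ℂ → ℂ) (lam : ℝ)
    (hlam : 0 < lam) (hlam1 : lam ≤ 1)
    (hh : DifferentiableOn ℂ h (ball (0:ℂ) 1))
    (hg : DifferentiableOn ℂ g (ball (0:ℂ) 1))
    (h0 : h 0 = 0) (h1 : deriv h 0 = 1) (g0 : g 0 = 0) (g1 : deriv g 0 = 0)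
    (hineq : ∀ z ∈ ball (0:ℂ) 1, ‖deriv h z - 1‖ < lam - ‖deriv g z‖) :
    ∀ z ∈ ball (0:ℂ) 1,
      ‖z‖ - lam * ‖z‖ ^ 2 / 2 ≤ ‖h z + (starRingEnd ℂ) (g z)‖ ∧
      ‖h z + (starRingEnd ℂ) (g z)‖ ≤ ‖z‖ + lam * ‖z‖ ^ 2 / 2 :=
  growth_bounds_lambda_general h g lam hh hg h0 h1 g0 g1 hineq
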